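/- arXiv:2006.07439 — 2 statements merged into one kernel-verified Lean document; each statement's English description precedes it below -/
import Mathlib

section
/- There exists N₀ such that the following holds for all n ≥ N₀. Let q be an odd prime, let a ∈ (ℤ/qℤ)^n with a ∉ 𝓛(n,q), and let ℓ ∈ (ℤ/qℤ)^n be a vector whose support has size s with s ≥ n/(2(log n)²). Then there are at least min{s²/20, s·n/(2(log n)²)} pairs 1 ≤ i < j ≤ n for which ℓ_i·a_j + ℓ_j·a_i ≠ 0 in ℤ/qℤ. -/
/-! Let `S` be the support of `ℓ`, `s = |S|`, and `T` the support of `a`; since `a ∉ 𝓛(n,q)`,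
the level set `{a = 0}` is small, so `|T| > n/(log n)²`. Split `S` into `U = S ∩ T` and `W = S \ T`.

If `|W| ≥ s/2`, every pair `(w, t) ∈ W × T` is good, since `ℓ_w a_t + ℓ_t a_w = ℓ_w a_t ≠ 0`;
this gives `|W| |T| ≥ s n / (2 (log n)²)` pairs.

If `|U| ≥ s/2`, put `c_i = ℓ_i / a_i ≠ 0` on `U`; a pair in `U` is bad iff `c_i + c_j = 0`.
As `c ≠ -c` for `c ≠ 0` in odd characteristic, ordering each pair `{c, -c}` makes the bad
pairs a bipartite graph on `U`, so at most half of `U × U` is bad, leaving about `|U|²/4 ≥ s²/16`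
good pairs `i < j`, which is at least `s²/20` once `s ≥ 20`. -/

/-- `a ∈ 𝓛(n,q)`: some level set of `a` has size at least `n - n/(log n)²`. -/
def inL (n q : ℕ) (a : Fin n → ZMod q) : Prop :=
  ∃ r : ZMod q,
    (n : ℝ) - n / (Real.log n) ^ 2 ≤ (Finset.univ.filter (fun i => a i = r)).card

open Finset Filter

theorem two_mul_card_filter_lt_eq_card_filter_ne {α : Type*} [Fintype α] [LinearOrder α]
    (r : α → α → Prop) [DecidableRel r] (hr : ∀ i j, r i j → r j i) :
    2 * #{p : α × α | p.1 < p.2 ∧ r p.1 p.2} = #{p : α × α | p.1 ≠ p.2 ∧ r p.1 p.2} := by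
  have hswap : #{p : α × α | p.2 < p.1 ∧ r p.1 p.2} = #{p : α × α | p.1 < p.2 ∧ r p.1 p.2} :=
    card_nbij' Prod.swap Prod.swap (fun p hp => by simp_all [hr p.1 p.2])
      (fun p hp => by simp_all [hr p.1 p.2]) (fun p _ => rfl) (fun p _ => rfl)
  rw [two_mul]
  nth_rw 2 [← hswap]
  rw [← card_union_of_disjoint (disjoint_filter.2 fun p _ h₁ h₂ => lt_asymm h₁.1 h₂.1)]
  congr 1
  ext p
  simp only [mem_filter, mem_univ, true_and, mem_union, ne_iff_lt_or_gt, or_and_right]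

theorem two_mul_card_filter_add_eq_zero_le_sq {ι G : Type*} [AddGroup G] [DecidableEq G]
    (s : Finset ι) (c : ι → G) (hc : ∀ i ∈ s, c i ≠ -c i) :
    2 * #{p ∈ s ×ˢ s | c p.1 + c p.2 = 0} ≤ #s ^ 2 := by
  classical
  -- Any linear order on `G` splits `s` by the sign test `c i < -c i`,
  -- and every pair with `c i + c j = 0` crosses the split.
  let : LinearOrder G := IsWellOrder.linearOrder WellOrderingRel
  set pos := {i ∈ s | c i < -c i}
  set neg := {i ∈ s | ¬ c i < -c i}
  have hsub : {p ∈ s ×ˢ s | c p.1 + c p.2 = 0} ⊆ pos ×ˢ neg ∪ neg ×ˢ pos := by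
    rintro ⟨i, j⟩ hp
    simp only [mem_filter, mem_product] at hp
    obtain ⟨⟨hi, hj⟩, hij⟩ := hp
    have hji : c j = -c i := eq_neg_of_add_eq_zero_right hij
    have hneg : c i < -c i ∨ -c i < c i := lt_or_gt_of_ne (hc i hi)
    simp only [pos, neg, mem_union, mem_product, mem_filter, hji, neg_neg]
    rcases hneg with h | h
    · exact .inl ⟨⟨hi, h⟩, hj, lt_asymm h⟩
    · exact .inr ⟨⟨hi, lt_asymm h⟩, hj, h⟩
  have hcard : #pos + #neg = #s := card_filter_add_card_filter_not _
  calc 2 * #{p ∈ s ×ˢ s | c p.1 + c p.2 = 0}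
      ≤ 2 * (#pos * #neg + #neg * #pos) := by
        grw [card_le_card hsub, card_union_le, card_product, card_product]
    _ = 4 * #pos * #neg := by ring
    _ ≤ (#pos + #neg) ^ 2 := four_mul_le_sq_add _ _
    _ = #s ^ 2 := by rw [hcard]

section Pairs

variable {ι : Type*} [Fintype ι] [DecidableEq ι]

def nonzeroCrossPairs {R : Type*} [Semiring R] [DecidableEq R] (ℓ a : ι → R) : Finset (ι × ι) :=
  {p | p.1 ≠ p.2 ∧ ℓ p.1 * a p.2 + ℓ p.2 * a p.1 ≠ 0}

theorem mem_nonzeroCrossPairs {R : Type*} [Semiring R] [DecidableEq R] {ℓ a : ι → R}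
    {p : ι × ι} : p ∈ nonzeroCrossPairs ℓ a ↔ p.1 ≠ p.2 ∧ ℓ p.1 * a p.2 + ℓ p.2 * a p.1 ≠ 0 := by
  simp [nonzeroCrossPairs]

theorem two_mul_card_mul_card_le_card_nonzeroCrossPairs {R : Type*} [Semiring R]
    [NoZeroDivisors R] [DecidableEq R] (ℓ a : ι → R) :
    2 * (#{i | ℓ i ≠ 0 ∧ a i = 0} * #{i | a i ≠ 0}) ≤ #(nonzeroCrossPairs ℓ a) := by
  set W := ({i | ℓ i ≠ 0 ∧ a i = 0} : Finset ι)
  set T := ({i | a i ≠ 0} : Finset ι)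
  have hWT : Disjoint W T := disjoint_filter.2 fun i _ hW hT => hT hW.2
  have hsub : W ×ˢ T ∪ T ×ˢ W ⊆ nonzeroCrossPairs ℓ a := by
    rintro ⟨i, j⟩ hp
    simp only [W, T, mem_union, mem_product, mem_filter, mem_univ, true_and] at hp
    rw [mem_nonzeroCrossPairs]
    rcases hp with ⟨⟨hℓi, hai⟩, haj⟩ | ⟨hai, hℓj, haj⟩
    · exact ⟨fun (h : i = j) => haj (h ▸ hai), by simpa [hai] using mul_ne_zero hℓi haj⟩
    · exact ⟨fun (h : i = j) => hai (h ▸ haj), by simpa [haj] using mul_ne_zero hℓj hai⟩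
  calc 2 * (#W * #T) = #(W ×ˢ T ∪ T ×ˢ W) := by
        rw [card_union_of_disjoint (disjoint_product.2 (.inl hWT)), card_product, card_product]
        ring
    _ ≤ _ := card_le_card hsub

theorem sq_card_le_two_mul_card_nonzeroCrossPairs_add {K : Type*} [Field K] [DecidableEq K]
    (h2 : (2 : K) ≠ 0) (ℓ a : ι → K) :
    #{i | ℓ i ≠ 0 ∧ a i ≠ 0} ^ 2
      ≤ 2 * (#(nonzeroCrossPairs ℓ a) + #{i | ℓ i ≠ 0 ∧ a i ≠ 0}) := by
  set U := ({i | ℓ i ≠ 0 ∧ a i ≠ 0} : Finset ι)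
  set c : ι → K := fun i => ℓ i / a i
  have hc : ∀ i ∈ U, c i ≠ -c i := by
    intro i hi h
    simp only [U, mem_filter, mem_univ, true_and] at hi
    have : 2 * c i = 0 := by rw [two_mul]; exact eq_neg_iff_add_eq_zero.1 h
    exact div_ne_zero hi.1 hi.2 ((mul_eq_zero.1 this).resolve_left h2)
  have hgood : {p ∈ U ×ˢ U | ¬ c p.1 + c p.2 = 0} ⊆ nonzeroCrossPairs ℓ a ∪ U.diag := by
    rintro ⟨i, j⟩ hp
    simp only [mem_filter, mem_product] at hp
    obtain ⟨⟨hi, hj⟩, hij⟩ := hp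
    by_cases h : i = j
    · exact mem_union_right _ (mem_diag.2 ⟨h ▸ hi, h⟩)
    · refine mem_union_left _ (mem_nonzeroCrossPairs.2 ⟨h, fun h0 => hij ?_⟩)
      simp only [U, mem_filter, mem_univ, true_and] at hi hj
      simp only [c]
      field_simp [hi.2, hj.2]
      linear_combination h0
  have hsplit := card_filter_add_card_filter_not (s := U ×ˢ U) fun p => c p.1 + c p.2 = 0
  have hbad := two_mul_card_filter_add_eq_zero_le_sq U c hc
  have hgood' := (card_le_card hgood).trans (card_union_le _ _)
  rw [card_product] at hsplit
  rw [diag_card] at hgood'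
  rw [sq] at hbad ⊢
  omega

theorem min_le_card_filter_lt_cross_ne_zero {ι K : Type*} [Fintype ι] [LinearOrder ι] [Field K]
    [DecidableEq K]
    (h2 : (2 : K) ≠ 0) (ℓ a : ι → K) (hs : 20 ≤ #{i | ℓ i ≠ 0}) :
    min ((#{i | ℓ i ≠ 0} : ℝ) ^ 2 / 20) ((#{i | ℓ i ≠ 0} : ℝ) * #{i | a i ≠ 0} / 2)
      ≤ (#{p : ι × ι | p.1 < p.2 ∧ ℓ p.1 * a p.2 + ℓ p.2 * a p.1 ≠ 0} : ℝ) := by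
  have hpairs : 2 * #{p : ι × ι | p.1 < p.2 ∧ ℓ p.1 * a p.2 + ℓ p.2 * a p.1 ≠ 0}
      = #(nonzeroCrossPairs ℓ a) :=
    two_mul_card_filter_lt_eq_card_filter_ne (fun i j => ℓ i * a j + ℓ j * a i ≠ 0)
      fun i j h => by rwa [add_comm]
  have hsplit : #{i | ℓ i ≠ 0 ∧ a i ≠ 0} + #{i | ℓ i ≠ 0 ∧ a i = 0} = #{i | ℓ i ≠ 0} := by
    simpa only [filter_filter, not_not] using
      card_filter_add_card_filter_not (s := {i | ℓ i ≠ 0}) fun i => a i ≠ 0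
  have hU := sq_card_le_two_mul_card_nonzeroCrossPairs_add h2 ℓ a
  have hW := two_mul_card_mul_card_le_card_nonzeroCrossPairs ℓ a
  rw [← hpairs] at hU hW
  set s := #{i | ℓ i ≠ 0}
  set t := #{i | ℓ i ≠ 0 ∧ a i ≠ 0}
  set w := #{i | ℓ i ≠ 0 ∧ a i = 0}
  set T := #{i | a i ≠ 0}
  set g := #{p : ι × ι | p.1 < p.2 ∧ ℓ p.1 * a p.2 + ℓ p.2 * a p.1 ≠ 0}
  have hs' : (20 : ℝ) ≤ s := by exact_mod_cast hs
  rcases le_or_gt s (2 * t) with hst | hst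
  · refine (min_le_left _ _).trans ?_
    have hU' : (t : ℝ) ^ 2 ≤ 2 * (2 * g + t) := by exact_mod_cast hU
    have hst' : (s : ℝ) ≤ 2 * t := by exact_mod_cast hst
    rw [div_le_iff₀ (by norm_num)]
    nlinarith [mul_nonneg (sub_nonneg.2 hst') (by linarith : (0 : ℝ) ≤ 2 * t + s - 4)]
  · refine (min_le_right _ _).trans ?_
    have hW' : (w : ℝ) * T ≤ g := by exact_mod_cast (by omega : w * T ≤ g)
    have hsw : (s : ℝ) ≤ 2 * w := by exact_mod_cast (by omega : s ≤ 2 * w)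
    rw [div_le_iff₀ (by norm_num)]
    nlinarith [T.cast_nonneg (α := ℝ)]

theorem eventually_le_div_two_mul_log_sq (C : ℝ) :
    ∀ᶠ n : ℕ in atTop, C ≤ n / (2 * Real.log n ^ 2) := by
  refine tendsto_natCast_atTop_atTop.eventually
    (p := fun x : ℝ => C ≤ x / (2 * Real.log x ^ 2)) ?_
  have hC : 0 < max C 1 := by positivity
  filter_upwards [(Real.isLittleO_pow_log_id_atTop (n := 2)).bound
    (by positivity : 0 < 1 / (2 * max C 1)), eventually_gt_atTop 1] with x hx hx1
  have hlog : 0 < Real.log x := Real.log_pos hx1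
  simp only [norm_pow, Real.norm_eq_abs, id, abs_of_pos hlog,
    abs_of_pos (zero_lt_one.trans hx1)] at hx
  rw [le_div_iff₀ (by positivity)]
  calc C * (2 * Real.log x ^ 2) ≤ max C 1 * (2 * Real.log x ^ 2) := by
        gcongr; exact le_max_left _ _
    _ ≤ max C 1 * (2 * (1 / (2 * max C 1) * x)) := by gcongr
    _ = x := by field_simp

theorem div_log_sq_lt_card_ne_zero_of_not_inL {n q : ℕ} {a : Fin n → ZMod q}
    (ha : ¬ inL n q a) :
    (n : ℝ) / Real.log n ^ 2 < #{i | a i ≠ 0} := by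
  have hzero : (#{i | a i = 0} : ℝ) < n - n / Real.log n ^ 2 := not_le.1 fun h => ha ⟨0, h⟩
  have hcard : #{i | a i = 0} + #{i | a i ≠ 0} = n := by
    simpa using card_filter_add_card_filter_not (s := (univ : Finset (Fin n))) fun i => a i = 0
  have hcard' : (#{i | a i = 0} : ℝ) + #{i | a i ≠ 0} = n := by exact_mod_cast hcard
  linarith

/-- There exists `N₀` such that for all `n ≥ N₀`: if `q` is an odd prime,
`a ∉ 𝓛(n,q)` and `ℓ` has support of size `s ≥ n/(2 (log n)²)`, then there are at
least `min {s²/20, s·n/(2 (log n)²)}` pairs `i < j` with `ℓ_i a_j + ℓ_j a_i ≠ 0`. -/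
theorem large_support_pairs :
    ∃ N₀ : ℕ, ∀ n : ℕ, N₀ ≤ n → ∀ q : ℕ, q.Prime → q ≠ 2 →
      ∀ a ℓ : Fin n → ZMod q, ¬ inL n q a →
      (n : ℝ) / (2 * (Real.log n) ^ 2)
          ≤ ((Finset.univ.filter (fun i => ℓ i ≠ 0)).card : ℝ) →
      min (((Finset.univ.filter (fun i => ℓ i ≠ 0)).card : ℝ) ^ 2 / 20)
          ((((Finset.univ.filter (fun i => ℓ i ≠ 0)).card : ℝ) * n)
            / (2 * (Real.log n) ^ 2))
        ≤ ((Finset.univ.filter (fun p : Fin n × Fin n =>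
            p.1 < p.2 ∧ ℓ p.1 * a p.2 + ℓ p.2 * a p.1 ≠ 0)).card : ℝ) := by
  obtain ⟨N₀, hN₀⟩ := eventually_atTop.1 (eventually_le_div_two_mul_log_sq 20)
  refine ⟨N₀, fun n hn q hq hq2 a ℓ ha hs => ?_⟩
  have : Fact q.Prime := ⟨hq⟩
  have h2 : (2 : ZMod q) ≠ 0 := Ring.two_ne_zero (by rwa [ZMod.ringChar_zmod_n])
  have hs20 : 20 ≤ #{i | ℓ i ≠ 0} := by exact_mod_cast (hN₀ n hn).trans hs
  refine le_trans ?_ (min_le_card_filter_lt_cross_ne_zero h2 ℓ a hs20)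
  gcongr min _ ?_
  calc _ = (#{i | ℓ i ≠ 0} : ℝ) * (n / Real.log n ^ 2) / 2 := by ring
    _ ≤ _ := by gcongr; exact (div_log_sq_lt_card_ne_zero_of_not_inL ha).le
end Pairs
end

section
/- Let q be a prime, let n ≥ 1, and let a, v ∈ (ℤ/qℤ)^n. Then Pr[M_n · a = v] = q^{−n} · Σ_{ℓ ∈ (ℤ/qℤ)^n} e^{−2πi·⟨ℓ,v⟩/q} · ∏_{1 ≤ i < j ≤ n} cos(2π(ℓ_i a_j + ℓ_j a_i)/q) · ∏_{i=1}^n cos(2π ℓ_i a_i /q), where for an element x ∈ ℤ/qℤ the expressions e^{2πi x/q} and cos(2πx/q) are evaluated at any integer representative of x (they are well-defined since all representatives differ by multiples of q), ⟨ℓ,v⟩ = Σ_i ℓ_i v_i ∈ ℤ/qℤ, and the equality is between complex numbers (the left-hand side being the real probability viewed as a complex number). -/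
/-- The random symmetric ±1 matrix: the upper-triangular entries
(including diagonal) are determined by independent fair coin flips
`σ i j` for `i ≤ j`, and the matrix is symmetric. -/
def signMatrix (n : ℕ) (σ : Fin n → Fin n → Bool) : Matrix (Fin n) (Fin n) ℤ :=
  fun i j => if σ (min i j) (max i j) then 1 else -1

/-- Probability, under the uniform distribution on symmetric ±1 matrices,
that the matrix satisfies `P`. -/
noncomputable def probSym (n : ℕ) (P : Matrix (Fin n) (Fin n) ℤ → Prop) : ℝ :=
  (Nat.card {σ : Fin n → Fin n → Bool // P (signMatrix n σ)} : ℝ) /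
    Fintype.card (Fin n → Fin n → Bool)

/-!
Write the indicator of `M a = v` as the character sum `q⁻ⁿ ∑ ℓ, e(⟨ℓ, M a - v⟩)` and average
over the signs. As `⟨ℓ, M a⟩ = ∑_{i ≤ j} mᵢⱼ wᵢⱼ` with `wᵢⱼ = ℓᵢaⱼ + ℓⱼaᵢ` for `i < j` and
`wᵢᵢ = ℓᵢaᵢ`, and the signs `mᵢⱼ` (`i ≤ j`) are independent, the average of `e(⟨ℓ, M a⟩)`
factors as `∏ (e(wᵢⱼ) + e(-wᵢⱼ)) / 2 = ∏ cos(2π wᵢⱼ / q)`.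
-/

open Finset Matrix

namespace AddChar

variable {R R' : Type*} [CommRing R] [CommRing R']

lemma map_sum_eq_prod (ψ : AddChar R R') {ι : Type*} (s : Finset ι) (f : ι → R) :
    ψ (∑ i ∈ s, f i) = ∏ i ∈ s, ψ (f i) := by
  classical
  induction s using Finset.induction with
  | empty => simp
  | insert i s hi ih => rw [sum_insert hi, prod_insert hi, map_add_eq_mul, ih]

variable [Fintype R] [DecidableEq R] [IsDomain R'] {ψ : AddChar R R'}
  {ι : Type*} [Fintype ι] [DecidableEq ι]

lemma sum_apply_dotProduct (hψ : ψ.IsPrimitive) (d : ι → R) :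
    ∑ ℓ : ι → R, ψ (ℓ ⬝ᵥ d) = if d = 0 then (Fintype.card R : R') ^ Fintype.card ι else 0 := by
  calc ∑ ℓ : ι → R, ψ (ℓ ⬝ᵥ d)
      = ∏ i, ∑ t : R, ψ (t * d i) := by
        simp only [dotProduct, map_sum_eq_prod, Fintype.prod_sum]
    _ = ∏ i, if d i = 0 then (Fintype.card R : R') else 0 := by
        simp only [sum_mulShift _ hψ, Nat.cast_ite, Nat.cast_zero]
    _ = _ := by
        simp only [Fintype.prod_ite_zero, prod_const, card_univ, funext_iff, Pi.zero_apply]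

lemma sum_apply_neg_dotProduct_mul (hψ : ψ.IsPrimitive) (x v : ι → R) :
    ∑ ℓ : ι → R, ψ (-(ℓ ⬝ᵥ v)) * ψ (ℓ ⬝ᵥ x)
      = if x = v then (Fintype.card R : R') ^ Fintype.card ι else 0 := by
  simp only [← map_add_eq_mul, neg_add_eq_sub, ← dotProduct_sub, sum_apply_dotProduct hψ,
    sub_eq_zero]

end AddChar

section PairSums

variable {ι : Type*} [Fintype ι] [LinearOrder ι]

lemma Fintype.sum_prod_eq_sum_lt_add_diag {M : Type*} [AddCommMonoid M] (t : ι × ι → M) :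
    ∑ p, t p = ∑ p, if p.1 < p.2 then t p + t p.swap else if p.1 = p.2 then t p else 0 := by
  have hswap : ∑ p : ι × ι, (if p.1 < p.2 then t p.swap else 0)
      = ∑ p : ι × ι, if p.2 < p.1 then t p else 0 :=
    Fintype.sum_equiv (Equiv.prodComm ι ι) _ _ fun p => rfl
  have hsplit : ∀ p : ι × ι, (if p.1 < p.2 then t p + t p.swap else if p.1 = p.2 then t p else 0)
      = ((if p.1 < p.2 then t p else 0) + if p.1 < p.2 then t p.swap else 0)
        + if p.1 = p.2 then t p else 0 := by
    intro p
    by_cases h : p.1 < p.2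
    · simp [h, h.ne]
    · simp [h]
  rw [Fintype.sum_congr _ _ hsplit, sum_add_distrib, sum_add_distrib, hswap,
    ← sum_add_distrib, ← sum_add_distrib]
  refine Fintype.sum_congr _ _ fun p => ?_
  rcases lt_trichotomy p.1 p.2 with h | h | h
  · simp [h, h.ne, not_lt_of_gt h]
  · simp [h]
  · simp [h, h.ne', not_lt_of_gt h]

lemma Fintype.prod_ite_lt_ite_eq {M : Type*} [CommMonoid M] (f : ι × ι → M) (g : ι → M) :
    ∏ p, (if p.1 < p.2 then f p else if p.1 = p.2 then g p.1 else 1)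
      = (∏ p ∈ univ.filter (fun p : ι × ι => p.1 < p.2), f p) * ∏ i, g i := by
  classical
  have hdiag : ∏ i, g i = ∏ p : ι × ι, if p.1 = p.2 then g p.1 else 1 := by
    simp [Fintype.prod_prod_type]
  rw [prod_filter, hdiag, ← prod_mul_distrib]
  refine Fintype.prod_congr _ _ fun p => ?_
  by_cases h : p.1 < p.2
  · simp [h, h.ne]
  · simp [h]

end PairSums

lemma Fintype.sum_curry_prod {α β γ R : Type*} [Fintype α] [Fintype β] [Fintype γ]
    [DecidableEq α] [DecidableEq β] [CommSemiring R] (g : α × β → γ → R) :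
    ∑ σ : α → β → γ, ∏ p, g p (σ p.1 p.2) = ∏ p, ∑ c, g p c := by
  rw [Fintype.prod_sum]
  exact (Equiv.sum_comp (Equiv.curry α β γ) fun σ => ∏ p, g p (σ p.1 p.2)).symm

section SignMatrix

variable {n : ℕ} {R : Type*} [CommRing R]

/-- The coefficient of the coin `σ i j` in `ℓ ⬝ᵥ (M *ᵥ a)`; coins below the diagonal are unused. -/
def pairWeight (ℓ a : Fin n → R) (p : Fin n × Fin n) : R :=
  if p.1 < p.2 then ℓ p.1 * a p.2 + ℓ p.2 * a p.1 else if p.1 = p.2 then ℓ p.1 * a p.1 else 0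

lemma dotProduct_signMatrix_mulVec (σ : Fin n → Fin n → Bool) (ℓ a : Fin n → R) :
    ℓ ⬝ᵥ ((signMatrix n σ).map (Int.cast : ℤ → R) *ᵥ a)
      = ∑ p, if σ p.1 p.2 then pairWeight ℓ a p else -pairWeight ℓ a p := by
  have hentry : ∀ i j, ((signMatrix n σ).map (Int.cast : ℤ → R)) i j
      = if σ (min i j) (max i j) then 1 else -1 := by
    intro i j
    simp only [map_apply, signMatrix, apply_ite (Int.cast : ℤ → R), Int.cast_one, Int.cast_neg]
  have hdouble : ℓ ⬝ᵥ ((signMatrix n σ).map (Int.cast : ℤ → R) *ᵥ a)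
      = ∑ p : Fin n × Fin n,
          ℓ p.1 * ((if σ (min p.1 p.2) (max p.1 p.2) then 1 else -1) * a p.2) := by
    simp only [dotProduct, mulVec, hentry, mul_sum, Fintype.sum_prod_type]
  rw [hdouble, Fintype.sum_prod_eq_sum_lt_add_diag]
  refine Fintype.sum_congr _ _ fun p => ?_
  rcases lt_trichotomy p.1 p.2 with h | h | h
  · simp only [pairWeight, Prod.fst_swap, Prod.snd_swap, min_comm p.2, max_comm p.2,
      min_eq_left h.le, max_eq_right h.le, if_pos h]
    split_ifs <;> ring
  · simp only [pairWeight, h, lt_irrefl, if_false, if_true, min_self, max_self]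
    split_ifs <;> ring
  · simp only [pairWeight, not_lt_of_gt h, h.ne', if_false, neg_zero, ite_self]

end SignMatrix

namespace ZMod

variable {q : ℕ} [NeZero q]

lemma stdAddChar_eq_exp (x : ZMod q) :
    stdAddChar x = Complex.exp (2 * Real.pi * Complex.I * (x.val : ℂ) / q) := by
  rw [stdAddChar_apply, toCircle_apply]

lemma stdAddChar_neg_eq_exp (x : ZMod q) :
    stdAddChar (-x) = Complex.exp (-(2 * Real.pi * Complex.I * (x.val : ℂ)) / q) := by
  rw [AddChar.map_neg_eq_inv, stdAddChar_eq_exp, ← Complex.exp_neg, neg_div]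

lemma stdAddChar_add_stdAddChar_neg (x : ZMod q) :
    stdAddChar x + stdAddChar (-x)
      = 2 * ((Real.cos (2 * Real.pi * (x.val : ℝ) / q) : ℝ) : ℂ) := by
  rw [stdAddChar_eq_exp, stdAddChar_neg_eq_exp, Complex.ofReal_cos, Complex.two_cos]
  push_cast
  ring_nf

end ZMod

lemma sum_stdAddChar_dotProduct_signMatrix_mulVec {n q : ℕ} [NeZero q] (ℓ a : Fin n → ZMod q) :
    ∑ σ : Fin n → Fin n → Bool,
        ZMod.stdAddChar (ℓ ⬝ᵥ ((signMatrix n σ).map (Int.cast : ℤ → ZMod q) *ᵥ a))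
      = 2 ^ (n * n) *
        ((∏ p ∈ univ.filter (fun p : Fin n × Fin n => p.1 < p.2),
            ((Real.cos (2 * Real.pi
              * ((ℓ p.1 * a p.2 + ℓ p.2 * a p.1 : ZMod q).val : ℝ) / q) : ℝ) : ℂ))
          * ∏ i, ((Real.cos (2 * Real.pi * ((ℓ i * a i : ZMod q).val : ℝ) / q) : ℝ) : ℂ)) := by
  let c : ZMod q → ℂ := fun x => ((Real.cos (2 * Real.pi * (x.val : ℝ) / q) : ℝ) : ℂ)
  have hsum : ∑ σ : Fin n → Fin n → Bool,
        ZMod.stdAddChar (ℓ ⬝ᵥ ((signMatrix n σ).map (Int.cast : ℤ → ZMod q) *ᵥ a))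
      = ∏ p, 2 * c (pairWeight ℓ a p) := by
    simp only [dotProduct_signMatrix_mulVec, AddChar.map_sum_eq_prod, apply_ite ZMod.stdAddChar]
    rw [Fintype.sum_curry_prod (fun p (b : Bool) =>
      if b then ZMod.stdAddChar (pairWeight ℓ a p) else ZMod.stdAddChar (-pairWeight ℓ a p))]
    simp only [Fintype.sum_bool, if_true, Bool.false_eq_true, if_false,
      ZMod.stdAddChar_add_stdAddChar_neg, c]
  have hweight : ∀ p, c (pairWeight ℓ a p)
      = if p.1 < p.2 then c (ℓ p.1 * a p.2 + ℓ p.2 * a p.1)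
        else if p.1 = p.2 then c (ℓ p.1 * a p.1) else 1 := by
    intro p
    unfold pairWeight
    split_ifs <;> simp [c]
  rw [hsum, prod_mul_distrib, prod_const, card_univ, Fintype.card_prod, Fintype.card_fin,
    Fintype.prod_congr _ _ hweight]
  exact congrArg _ (Fintype.prod_ite_lt_ite_eq _ fun i => c (ℓ i * a i))

lemma probSym_eq_sum_div (n : ℕ) (P : Matrix (Fin n) (Fin n) ℤ → Prop) [DecidablePred P] :
    (probSym n P : ℂ) = (∑ σ, if P (signMatrix n σ) then 1 else 0) / 2 ^ (n * n) := by
  rw [probSym, Nat.card_eq_fintype_card, Fintype.card_subtype, ← sum_boole]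
  simp [← pow_mul]

theorem fourier_expansion_general (n q : ℕ) [Fact q.Prime]
    (a v : Fin n → ZMod q) :
    (probSym n (fun M => (M.map (Int.cast : ℤ → ZMod q)).mulVec a = v) : ℂ)
      = (q : ℂ) ^ (-(n : ℤ)) *
        ∑ ℓ : Fin n → ZMod q,
          Complex.exp (-(2 * (Real.pi : ℂ) * Complex.I
              * ((∑ i, ℓ i * v i : ZMod q).val : ℂ)) / q)
          * (∏ p ∈ Finset.univ.filter (fun p : Fin n × Fin n => p.1 < p.2),
              ((Real.cos (2 * Real.pi
                * ((ℓ p.1 * a p.2 + ℓ p.2 * a p.1 : ZMod q).val : ℝ) / q) : ℝ) : ℂ))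
          * ∏ i : Fin n,
              ((Real.cos (2 * Real.pi * ((ℓ i * a i : ZMod q).val : ℝ) / q) : ℝ) : ℂ) := by
  classical
  have : NeZero q := ⟨(Fact.out : q.Prime).ne_zero⟩
  let ψ : AddChar (ZMod q) ℂ := ZMod.stdAddChar
  have hindicator (σ : Fin n → Fin n → Bool) :
      (if (signMatrix n σ).map (Int.cast : ℤ → ZMod q) *ᵥ a = v then 1 else 0 : ℂ)
        = ((q : ℂ) ^ n)⁻¹ *
            ∑ ℓ, ψ (-(ℓ ⬝ᵥ v)) * ψ (ℓ ⬝ᵥ ((signMatrix n σ).map Int.cast *ᵥ a)) := by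
    rw [AddChar.sum_apply_neg_dotProduct_mul (ZMod.isPrimitive_stdAddChar q), ZMod.card,
      Fintype.card_fin, mul_ite, mul_zero, inv_mul_cancel₀ (by simp [NeZero.ne q])]
  rw [probSym_eq_sum_div, _root_.zpow_neg, zpow_natCast]
  calc (∑ σ, if (signMatrix n σ).map (Int.cast : ℤ → ZMod q) *ᵥ a = v then 1 else 0)
          / 2 ^ (n * n)
      = ((q : ℂ) ^ n)⁻¹ * ∑ ℓ : Fin n → ZMod q, ψ (-(ℓ ⬝ᵥ v)) *
          ((∑ σ, ψ (ℓ ⬝ᵥ ((signMatrix n σ).map Int.cast *ᵥ a))) / 2 ^ (n * n)) := by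
        simp only [hindicator, ← mul_sum, mul_div_assoc, sum_div]
        rw [sum_comm]
        simp only [mul_sum]
    _ = _ := by
        simp only [sum_stdAddChar_dotProduct_signMatrix_mulVec, ψ, ZMod.stdAddChar_neg_eq_exp,
          mul_div_cancel_left₀ _ (pow_ne_zero (n * n) (two_ne_zero : (2 : ℂ) ≠ 0))]
        simp only [dotProduct, mul_assoc]

/-- The Fourier expansion of `Pr[M_n · a = v]` over `ℤ/qℤ`: it equals
`q^(-n) Σ_ℓ e^(-2πi⟨ℓ,v⟩/q) ∏_{i<j} cos(2π(ℓᵢaⱼ+ℓⱼaᵢ)/q) ∏_i cos(2πℓᵢaᵢ/q)`,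
where elements of `ℤ/qℤ` are evaluated at their canonical integer representative. -/
theorem fourier_expansion (n q : ℕ) [Fact q.Prime] (hn : 1 ≤ n)
    (a v : Fin n → ZMod q) :
    (probSym n (fun M => (M.map (Int.cast : ℤ → ZMod q)).mulVec a = v) : ℂ)
      = (q : ℂ) ^ (-(n : ℤ)) *
        ∑ ℓ : Fin n → ZMod q,
          Complex.exp (-(2 * (Real.pi : ℂ) * Complex.I
              * ((∑ i, ℓ i * v i : ZMod q).val : ℂ)) / q)
          * (∏ p ∈ Finset.univ.filter (fun p : Fin n × Fin n => p.1 < p.2),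
              ((Real.cos (2 * Real.pi
                * ((ℓ p.1 * a p.2 + ℓ p.2 * a p.1 : ZMod q).val : ℝ) / q) : ℝ) : ℂ))
          * ∏ i : Fin n,
              ((Real.cos (2 * Real.pi * ((ℓ i * a i : ZMod q).val : ℝ) / q) : ℝ) : ℂ) :=
  fourier_expansion_general n q a v
end
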